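/- For every positive integer k there exists a planar graph on n = 11k vertices whose largest 1-bend free set has size at most 10n/11, namely the disjoint union of k copies of the Goldner–Harary graph. -/

import Mathlib

/-- A 1-bend crossing-free drawing: each vertex gets a point, each edge `uv`
gets a bend point, and the edge is drawn as the 2-segment polygonal chain
`p u — bend u v — p v`; no vertex lies on the chain of an edge it does not belong
to, and chains of distinct edges meet only in shared endpoints. -/
def IsOneBendCF {V : Type*} (G : SimpleGraph V) (p : V → ℝ × ℝ)
    (bend : V → V → ℝ × ℝ) : Prop :=
  Function.Injective p ∧
  (∀ u v, G.Adj u v → bend u v = bend v u) ∧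
  (∀ u v w : V, G.Adj u v → w ≠ u → w ≠ v →
    p w ∉ segment ℝ (p u) (bend u v) ∪ segment ℝ (bend u v) (p v)) ∧
  (∀ a b c d : V, G.Adj a b → G.Adj c d → ({a, b} : Set V) ≠ ({c, d} : Set V) →
    (segment ℝ (p a) (bend a b) ∪ segment ℝ (bend a b) (p b)) ∩
      (segment ℝ (p c) (bend c d) ∪ segment ℝ (bend c d) (p d)) ⊆
      p '' (({a, b} : Set V) ∩ ({c, d} : Set V)))

/-- A straight-line crossing-free drawing, as the special case of a 1-bend
drawing in which every edge is drawn straight (bend at the midpoint). -/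
def IsCFDrawing {V : Type*} (G : SimpleGraph V) (p : V → ℝ × ℝ) : Prop :=
  IsOneBendCF G p (fun u v => (1 / 2 : ℝ) • (p u + p v))

/-- A graph is planar if it admits a straight-line crossing-free drawing. -/
def IsPlanar {V : Type*} (G : SimpleGraph V) : Prop :=
  ∃ p : V → ℝ × ℝ, IsCFDrawing G p

/-- An ordered 1-bend free set: for all target points with strictly increasing
x-coordinates there is a 1-bend crossing-free drawing placing `v i` at `(x i, y i)`. -/
def IsOneBendFreeSeq {V : Type*} (G : SimpleGraph V) {s : ℕ} (v : Fin s → V) : Prop :=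
  ∀ x y : Fin s → ℝ, StrictMono x →
    ∃ (p : V → ℝ × ℝ) (bend : V → V → ℝ × ℝ),
      IsOneBendCF G p bend ∧ ∀ i, p (v i) = (x i, y i)

/-- The Goldner–Harary graph: stellate each of the six faces of the triangular
bipyramid on vertices `0,1` (apexes) and `2,3,4` (equator) with one of the
vertices `5,…,10`. It is an 11-vertex non-Hamiltonian triangulation. -/
def GoldnerHarary : SimpleGraph (Fin 11) :=
  SimpleGraph.fromRel (fun u v => (u, v) ∈
    [((0 : Fin 11), (2 : Fin 11)), (0, 3), (0, 4), (1, 2), (1, 3), (1, 4),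
     (2, 3), (3, 4), (4, 2),
     (5, 0), (5, 2), (5, 3), (6, 0), (6, 3), (6, 4), (7, 0), (7, 4), (7, 2),
     (8, 1), (8, 2), (8, 3), (9, 1), (9, 3), (9, 4), (10, 1), (10, 4), (10, 2)])

/-- The disjoint union of `k` copies of a graph on `Fin 11`. -/
def copies (k : ℕ) (G : SimpleGraph (Fin 11)) : SimpleGraph (Fin k × Fin 11) where
  Adj a b := a.1 = b.1 ∧ G.Adj a.2 b.2
  symm := by
    constructor
    intro a b h
    exact ⟨h.1.symm, h.2.symm⟩
  loopless := by
    constructor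
    intro a h
    exact G.irrefl h.2


namespace OB


/-! ### basic segment lemmas -/

lemma mem_seg {u v z : ℝ × ℝ} :
    z ∈ segment ℝ u v ↔ ∃ t : ℝ, 0 ≤ t ∧ t ≤ 1 ∧
      z.1 = u.1 + t * (v.1 - u.1) ∧ z.2 = u.2 + t * (v.2 - u.2) := by
  rw [segment_eq_image']
  constructor
  · rintro ⟨t, ⟨ht0, ht1⟩, rfl⟩
    exact ⟨t, ht0, ht1, rfl, rfl⟩
  · rintro ⟨t, ht0, ht1, h1, h2⟩
    exact ⟨t, ⟨ht0, ht1⟩, by apply Prod.ext <;> simp [smul_eq_mul, h1, h2]⟩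

lemma combo_lt {A B c t : ℝ} (ht0 : 0 ≤ t) (ht1 : t ≤ 1) (hA : A < c) (hB : B < c) :
    A + t * (B - A) < c := by
  rcases eq_or_lt_of_le ht1 with rfl | h
  · nlinarith
  · nlinarith [mul_pos (sub_pos.2 h) (sub_pos.2 hA), mul_nonneg ht0 (sub_pos.2 hB).le]

def oR (a b c : ℝ × ℝ) : ℝ := (b.1 - a.1) * (c.2 - a.2) - (b.2 - a.2) * (c.1 - a.1)

lemma not_mem_seg_of_oR {u v w : ℝ × ℝ} (h : oR u v w ≠ 0) : w ∉ segment ℝ u v := by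
  intro hw
  rcases mem_seg.1 hw with ⟨t, _, _, h1, h2⟩
  apply h
  unfold oR
  rw [h1, h2]; ring

lemma seg_shared {a b c : ℝ × ℝ} (h : oR a b c ≠ 0) :
    ∀ X, X ∈ segment ℝ a b → X ∈ segment ℝ a c → X = a := by
  intro X hX hX'
  rcases mem_seg.1 hX with ⟨t, ht0, ht1, a1, a2⟩
  rcases mem_seg.1 hX' with ⟨s, hs0, hs1, b1, b2⟩
  have e1 : t * (b.1 - a.1) = s * (c.1 - a.1) := by linarith
  have e2 : t * (b.2 - a.2) = s * (c.2 - a.2) := by linarith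
  have ht : t * oR a b c = 0 := by
    unfold oR
    linear_combination (c.2 - a.2) * e1 - (c.1 - a.1) * e2
  have ht0' : t = 0 := by
    rcases mul_eq_zero.1 ht with h' | h'
    · exact h'
    · exact absurd h' h
  apply Prod.ext <;> [rw [a1, ht0']; rw [a2, ht0']] <;> ring

lemma seg_disj_le {u v w z : ℝ × ℝ} (fx fy c : ℝ)
    (h1 : fx * u.1 + fy * u.2 ≤ c) (h2 : fx * v.1 + fy * v.2 ≤ c)
    (h3 : c < fx * w.1 + fy * w.2) (h4 : c < fx * z.1 + fy * z.2) :
    ∀ X, X ∈ segment ℝ u v → X ∈ segment ℝ w z → False := by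
  intro X hX hX'
  rcases mem_seg.1 hX with ⟨t, ht0, ht1, a1, a2⟩
  rcases mem_seg.1 hX' with ⟨s, hs0, hs1, b1, b2⟩
  have e1 : fx * X.1 + fy * X.2 ≤ c := by
    rw [a1, a2]
    nlinarith [mul_nonneg ht0 (by linarith : 0 ≤ c - (fx * v.1 + fy * v.2)),
      mul_nonneg (by linarith : (0:ℝ) ≤ 1 - t) (by linarith : 0 ≤ c - (fx * u.1 + fy * u.2))]
  have e2 : c < fx * X.1 + fy * X.2 := by
    have h3' : -(fx * w.1 + fy * w.2) < -c := by linarith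
    have h4' : -(fx * z.1 + fy * z.2) < -c := by linarith
    have := combo_lt (A := -(fx * w.1 + fy * w.2)) (B := -(fx * z.1 + fy * z.2)) hs0 hs1 h3' h4'
    rw [b1, b2]; nlinarith [this]
  linarith

lemma seg_disj_orient {a b w z : ℝ × ℝ} (h1 : 0 < oR a b w) (h2 : 0 < oR a b z) :
    ∀ X, X ∈ segment ℝ a b → X ∈ segment ℝ w z → False := by
  have e1 : -(b.2 - a.2) * w.1 + (b.1 - a.1) * w.2 -
      (-(b.2 - a.2) * a.1 + (b.1 - a.1) * a.2) = oR a b w := by unfold oR; ring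
  have e2 : -(b.2 - a.2) * z.1 + (b.1 - a.1) * z.2 -
      (-(b.2 - a.2) * a.1 + (b.1 - a.1) * a.2) = oR a b z := by unfold oR; ring
  apply seg_disj_le (-(b.2 - a.2)) (b.1 - a.1) (-(b.2 - a.2) * a.1 + (b.1 - a.1) * a.2)
  · exact le_refl _
  · exact le_of_eq (by ring)
  · linarith
  · linarith

lemma mid_mem (u v : ℝ × ℝ) : (1 / 2 : ℝ) • (u + v) ∈ segment ℝ u v := by
  refine mem_seg.2 ⟨1 / 2, by norm_num, by norm_num, ?_, ?_⟩ <;> simp <;> ring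

lemma chain_sub (u v : ℝ × ℝ) :
    segment ℝ u ((1 / 2 : ℝ) • (u + v)) ∪ segment ℝ ((1 / 2 : ℝ) • (u + v)) v ⊆
      segment ℝ u v := by
  intro X hX
  rcases hX with h | h
  · exact (convex_segment u v).segment_subset (left_mem_segment ℝ u v) (mid_mem u v) h
  · exact (convex_segment u v).segment_subset (mid_mem u v) (right_mem_segment ℝ u v) h

lemma seg_x_bound {u v : ℝ × ℝ} {l r : ℝ} (h1 : l ≤ u.1) (h2 : u.1 ≤ r)
    (h3 : l ≤ v.1) (h4 : v.1 ≤ r) : ∀ X ∈ segment ℝ u v, l ≤ X.1 ∧ X.1 ≤ r := by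
  intro X hX
  rcases mem_seg.1 hX with ⟨t, ht0, ht1, a1, _⟩
  rw [a1]
  constructor <;> nlinarith [mul_nonneg ht0 (by linarith : 0 ≤ v.1 - l),
    mul_nonneg ht0 (by linarith : 0 ≤ r - v.1),
    mul_nonneg (by linarith : (0:ℝ) ≤ 1 - t) (by linarith : 0 ≤ u.1 - l),
    mul_nonneg (by linarith : (0:ℝ) ≤ 1 - t) (by linarith : 0 ≤ r - u.1)]

lemma seg_y_nonneg {u v : ℝ × ℝ} (hu : 0 ≤ u.2) (hv : 0 ≤ v.2) :
    ∀ z ∈ segment ℝ u v, 0 ≤ z.2 := by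
  intro z hz
  rcases mem_seg.1 hz with ⟨t, ht0, ht1, _, h2⟩
  rw [h2]; nlinarith

/-- a horizontal point between two horizontal points lies on their segment -/
lemma mem_seg_horiz {x y γ : ℝ} (h1 : x ≤ γ) (h2 : γ ≤ y) :
    ((γ, 0) : ℝ × ℝ) ∈ segment ℝ (x, 0) (y, 0) := by
  rcases eq_or_lt_of_le (h1.trans h2) with rfl | hxy
  · have : γ = x := le_antisymm (by linarith) h1
    subst this
    exact left_mem_segment ℝ _ _
  · have hne : y - x ≠ 0 := by linarith
    refine mem_seg.2 ⟨(γ - x) / (y - x), div_nonneg (by linarith) (by linarith), ?_, ?_, by simp⟩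
    · rw [div_le_one (by linarith)]; linarith
    · simp only
      field_simp
      ring
  
/-- flat-bend edge covers every intermediate spine point -/
lemma flat_covers {x y p1 γ : ℝ} (h1 : x ≤ γ) (h2 : γ ≤ y) :
    ((γ, 0) : ℝ × ℝ) ∈ segment ℝ (x, 0) (p1, 0) ∪ segment ℝ (p1, 0) (y, 0) := by
  rcases le_total γ p1 with h | h
  · exact Set.mem_union_left _ (mem_seg_horiz h1 h)
  · exact Set.mem_union_right _ (mem_seg_horiz h h2)

lemma ivt_seg {X Y : ℝ × ℝ} {f1 f2 : ℝ × ℝ → ℝ} (hf1 : Continuous f1) (hf2 : Continuous f2)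
    (hX : 0 < min (f1 X) (f2 X)) (hY : min (f1 Y) (f2 Y) ≤ 0) :
    ∃ Z ∈ segment ℝ X Y, min (f1 Z) (f2 Z) = 0 := by
  set path : ℝ → ℝ × ℝ := fun t => X + t • (Y - X) with hpath
  have hc : Continuous fun t => min (f1 (path t)) (f2 (path t)) := by
    have hp : Continuous path := by
      apply continuous_const.add
      exact continuous_id.smul continuous_const
    exact (hf1.comp hp).min (hf2.comp hp)
  have h01 : (0 : ℝ) ≤ 1 := zero_le_one
  have := intermediate_value_Icc' h01 hc.continuousOn
  have h0 : (0 : ℝ) ∈ Set.Icc (min (f1 (path 1)) (f2 (path 1))) (min (f1 (path 0)) (f2 (path 0))) := by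
    constructor
    · simpa [hpath] using hY
    · simpa [hpath] using hX.le
  rcases this h0 with ⟨t, ht, hval⟩
  refine ⟨path t, ?_, hval⟩
  rw [segment_eq_image']
  exact ⟨t, ht, rfl⟩

/-- The main crossing lemma: two one-bend chains above the spine with
interleaved feet must intersect. -/
lemma crossing {α β γ δ p1 p2 q1 q2 : ℝ} (hag : α < γ) (hgb : γ < β) (hbd : β < δ)
    (hp : 0 < p2) (hq : 0 < q2) :
    ∃ Z : ℝ × ℝ,
      (Z ∈ segment ℝ ((α, 0) : ℝ × ℝ) (p1, p2) ∪ segment ℝ ((p1, p2) : ℝ × ℝ) (β, 0)) ∧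
      (Z ∈ segment ℝ ((γ, 0) : ℝ × ℝ) (q1, q2) ∪ segment ℝ ((q1, q2) : ℝ × ℝ) (δ, 0)) := by
  set f1 : ℝ × ℝ → ℝ := fun X => p2 * (X.1 - α) - (p1 - α) * X.2 with hf1def
  set f2 : ℝ × ℝ → ℝ := fun X => (p1 - β) * X.2 - p2 * (X.1 - β) with hf2def
  have hf1c : Continuous f1 := by fun_prop
  have hf2c : Continuous f2 := by fun_prop
  have hC : 0 < min (f1 (γ, 0)) (f2 (γ, 0)) := by
    simp only [hf1def, hf2def, lt_min_iff]
    constructor <;> [skip; skip] <;> simp <;> nlinarith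
  have hD : min (f1 (δ, 0)) (f2 (δ, 0)) ≤ 0 := by
    apply min_le_of_right_le
    simp only [hf2def]
    simp
    nlinarith
  -- find Z on chain 2 with min (f1 Z) (f2 Z) = 0
  have step1 : ∃ Z : ℝ × ℝ,
      (Z ∈ segment ℝ ((γ, 0) : ℝ × ℝ) (q1, q2) ∪ segment ℝ ((q1, q2) : ℝ × ℝ) (δ, 0)) ∧
      min (f1 Z) (f2 Z) = 0 := by
    rcases le_or_gt (min (f1 (q1, q2)) (f2 (q1, q2))) 0 with hQ | hQ
    · rcases ivt_seg hf1c hf2c hC hQ with ⟨Z, hZ, hval⟩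
      exact ⟨Z, Set.mem_union_left _ hZ, hval⟩
    · rcases ivt_seg hf1c hf2c hQ hD with ⟨Z, hZ, hval⟩
      exact ⟨Z, Set.mem_union_right _ hZ, hval⟩
  rcases step1 with ⟨Z, hZc2, hval⟩
  refine ⟨Z, ?_, hZc2⟩
  have hZy : 0 ≤ Z.2 := by
    rcases hZc2 with h | h
    · exact seg_y_nonneg (by norm_num) (by simpa using hq.le) _ h
    · exact seg_y_nonneg (by simpa using hq.le) (by norm_num) _ h
  have hmin1 : 0 ≤ f1 Z := by
    have h' := min_le_left (f1 Z) (f2 Z)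
    rw [hval] at h'; exact h'
  have hmin2 : 0 ≤ f2 Z := by
    have h' := min_le_right (f1 Z) (f2 Z)
    rw [hval] at h'; exact h'
  have hZ2p : Z.2 ≤ p2 := by
    rcases min_eq_iff.1 hval with ⟨h0, _⟩ | ⟨h0, _⟩
    · have e1 : p2 * (Z.1 - α) - (p1 - α) * Z.2 = 0 := h0
      have e2 : 0 ≤ (p1 - β) * Z.2 - p2 * (Z.1 - β) := hmin2
      nlinarith [e1, e2]
    · have e1 : (p1 - β) * Z.2 - p2 * (Z.1 - β) = 0 := h0
      have e2 : 0 ≤ p2 * (Z.1 - α) - (p1 - α) * Z.2 := hmin1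
      nlinarith [e1, e2]
  rcases min_eq_iff.1 hval with ⟨h0, _⟩ | ⟨h0, _⟩
  · left
    have e1 : p2 * (Z.1 - α) - (p1 - α) * Z.2 = 0 := h0
    refine mem_seg.2 ⟨Z.2 / p2, div_nonneg hZy hp.le, by rw [div_le_one hp]; exact hZ2p, ?_, ?_⟩
    · simp only
      field_simp
      nlinarith [e1]
    · simp only
      field_simp
      ring
  · right
    have e1 : (p1 - β) * Z.2 - p2 * (Z.1 - β) = 0 := h0
    refine mem_seg.2 ⟨1 - Z.2 / p2, by rw [sub_nonneg, div_le_one hp]; exact hZ2p,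
      by rw [sub_le_self_iff]; exact div_nonneg hZy hp.le, ?_, ?_⟩
    · simp only
      field_simp
      nlinarith [e1]
    · simp only
      field_simp
      ring


def GHL : List (Fin 11 × Fin 11) :=
  [((0 : Fin 11), (2 : Fin 11)), (0, 3), (0, 4), (1, 2), (1, 3), (1, 4),
   (2, 3), (3, 4), (4, 2),
   (5, 0), (5, 2), (5, 3), (6, 0), (6, 3), (6, 4), (7, 0), (7, 4), (7, 2),
   (8, 1), (8, 2), (8, 3), (9, 1), (9, 3), (9, 4), (10, 1), (10, 4), (10, 2)]

def qz : Fin 11 → ℤ × ℤ :=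
  ![(570, 120), (550, 1100), (560, 300), (0, 0), (1200, 10), (376, 140),
    (590, 40), (770, 140), (370, 466), (550, 1500), (770, 470)]

def oz (a b c : ℤ × ℤ) : ℤ := (b.1 - a.1) * (c.2 - a.2) - (b.2 - a.2) * (c.1 - a.1)

def EdgeB (u v : Fin 11) : Bool := decide ((u, v) ∈ GHL) || decide ((v, u) ∈ GHL)

abbrev sepZ (u v w z : Fin 11) : Prop :=
  (0 < oz (qz u) (qz v) (qz w) ∧ 0 < oz (qz u) (qz v) (qz z)) ∨
  (oz (qz u) (qz v) (qz w) < 0 ∧ oz (qz u) (qz v) (qz z) < 0) ∨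
  (0 < oz (qz w) (qz z) (qz u) ∧ 0 < oz (qz w) (qz z) (qz v)) ∨
  (oz (qz w) (qz z) (qz u) < 0 ∧ oz (qz w) (qz z) (qz v) < 0)

lemma D1 : ∀ u v w : Fin 11, u ≠ v → u ≠ w → v ≠ w → oz (qz u) (qz v) (qz w) ≠ 0 := by decide

lemma D2 : ∀ u v w z : Fin 11, EdgeB u v = true → EdgeB w z = true →
    u ≠ w → u ≠ z → v ≠ w → v ≠ z → sepZ u v w z := by decide

lemma D3 : ∀ v : Fin 11, 0 ≤ (qz v).1 ∧ (qz v).1 ≤ 1200 := by decide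

lemma D0 : ∀ u v : Fin 11, u ≠ v → qz u ≠ qz v := by decide

lemma adjE {u v : Fin 11} (h : GoldnerHarary.Adj u v) : EdgeB u v = true := by
  rw [GoldnerHarary, SimpleGraph.fromRel_adj] at h
  have := h.2
  simp only [EdgeB, GHL, Bool.or_eq_true, decide_eq_true_eq]
  simpa using this

/-- the drawing of `k` copies -/
def pA (k : ℕ) : Fin k × Fin 11 → ℝ × ℝ :=
  fun a => (2000 * ((a.1 : ℕ) : ℝ) + ((qz a.2).1 : ℝ), ((qz a.2).2 : ℝ))

lemma pA_bounds {k : ℕ} (a : Fin k × Fin 11) :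
    2000 * ((a.1 : ℕ) : ℝ) ≤ (pA k a).1 ∧ (pA k a).1 ≤ 2000 * ((a.1 : ℕ) : ℝ) + 1200 := by
  have h := D3 a.2
  have h1 : ((0 : ℤ) : ℝ) ≤ (((qz a.2).1 : ℤ) : ℝ) := Int.cast_le.2 h.1
  have h2 : (((qz a.2).1 : ℤ) : ℝ) ≤ ((1200 : ℤ) : ℝ) := Int.cast_le.2 h.2
  push_cast at h1 h2
  constructor <;> simp only [pA] <;> linarith

lemma strips {k : ℕ} {i l : Fin k} {x : ℝ} (ha : 2000 * ((i : ℕ) : ℝ) ≤ x)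
    (hb : x ≤ 2000 * ((i : ℕ) : ℝ) + 1200) (hc : 2000 * ((l : ℕ) : ℝ) ≤ x)
    (hd : x ≤ 2000 * ((l : ℕ) : ℝ) + 1200) : i = l := by
  by_contra hne
  have : (i : ℕ) ≠ (l : ℕ) := fun h => hne (Fin.ext h)
  rcases this.lt_or_gt with h | h
  · have : ((i : ℕ) : ℝ) + 1 ≤ ((l : ℕ) : ℝ) := by exact_mod_cast Nat.succ_le_of_lt h
    linarith
  · have : ((l : ℕ) : ℝ) + 1 ≤ ((i : ℕ) : ℝ) := by exact_mod_cast Nat.succ_le_of_lt h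
    linarith

lemma oR_pA {k : ℕ} (i : Fin k) (u v w : Fin 11) :
    oR (pA k (i, u)) (pA k (i, v)) (pA k (i, w)) = ((oz (qz u) (qz v) (qz w) : ℤ) : ℝ) := by
  simp only [oR, oz, pA]
  push_cast
  ring

lemma oR_ne {k : ℕ} (i : Fin k) {u v w : Fin 11} (h1 : u ≠ v) (h2 : u ≠ w) (h3 : v ≠ w) :
    oR (pA k (i, u)) (pA k (i, v)) (pA k (i, w)) ≠ 0 := by
  rw [oR_pA]
  exact_mod_cast D1 u v w h1 h2 h3

theorem copies_planar (k : ℕ) : IsPlanar (copies k GoldnerHarary) := by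
  refine ⟨pA k, ?_, fun u v _ => by simp [add_comm], ?_, ?_⟩
  · -- injectivity
    rintro ⟨i, u⟩ ⟨j, w⟩ h
    have hx := congrArg Prod.fst h
    have hy := congrArg Prod.snd h
    simp only [pA] at hx hy
    have hij : i = j := by
      have b1 := (pA_bounds (k := k) (i, u)).1
      have b2 := (pA_bounds (k := k) (i, u)).2
      have b3 := (pA_bounds (k := k) (j, w)).1
      have b4 := (pA_bounds (k := k) (j, w)).2
      simp only [pA] at b1 b2 b3 b4
      exact strips b1 b2 (hx ▸ b3) (hx ▸ b4)
    subst hij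
    have hqx : ((qz u).1 : ℝ) = ((qz w).1 : ℝ) := by linarith
    have hq : qz u = qz w := by
      apply Prod.ext
      · exact_mod_cast hqx
      · exact_mod_cast hy
    by_contra hne
    have huw : u ≠ w := fun h' => hne (by rw [h'])
    exact D0 u w huw hq
  · -- no vertex on a chain
    rintro ⟨i, u⟩ ⟨j, v⟩ ⟨l, w⟩ ⟨hcopy, hadj⟩ hne1 hne2 hmem
    simp only at hcopy
    subst hcopy
    have hmem' := chain_sub _ _ hmem
    by_cases hl : l = i
    · subst hl
      have huv : u ≠ v := hadj.ne
      have hwu : w ≠ u := fun h' => hne1 (by rw [h'])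
      have hwv : w ≠ v := fun h' => hne2 (by rw [h'])
      exact not_mem_seg_of_oR (oR_ne l huv hwu.symm hwv.symm) hmem'
    · have b1 := (pA_bounds (k := k) (i, u)).1
      have b2 := (pA_bounds (k := k) (i, u)).2
      have b3 := (pA_bounds (k := k) (i, v)).1
      have b4 := (pA_bounds (k := k) (i, v)).2
      have hb := seg_x_bound b1 b2 b3 b4 _ hmem'
      have c1 := (pA_bounds (k := k) (l, w)).1
      have c2 := (pA_bounds (k := k) (l, w)).2
      have e : l = i := strips c1 c2 hb.1 hb.2
      exact hl e
  · -- chains of distinct edges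
    rintro ⟨i, u⟩ ⟨i2, v⟩ ⟨j, w⟩ ⟨j2, z⟩ ⟨h1, hadj1⟩ ⟨h2, hadj2⟩ hSetNe X ⟨hX1, hX2⟩
    simp only at h1 h2
    subst h1
    subst h2
    have hX1' := chain_sub _ _ hX1
    have hX2' := chain_sub _ _ hX2
    by_cases hij : i = j
    · subst hij
      have huv : u ≠ v := hadj1.ne
      have hwz : w ≠ z := hadj2.ne
      by_cases huw : u = w
      · by_cases hvz : v = z
        · exact absurd (by rw [huw, hvz]) hSetNe
        · subst huw
          have hX : X = pA k (i, u) := seg_shared (oR_ne i huv hwz hvz) X hX1' hX2'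
          exact ⟨(i, u), ⟨Or.inl rfl, Or.inl rfl⟩, hX.symm⟩
      · by_cases huz : u = z
        · by_cases hvw : v = w
          · exact absurd (by rw [huz, hvw, Set.pair_comm]) hSetNe
          · subst huz
            rw [segment_symm] at hX2'
            have hX : X = pA k (i, u) := seg_shared (oR_ne i huv huw hvw) X hX1' hX2'
            exact ⟨(i, u), ⟨Or.inl rfl, Or.inr rfl⟩, hX.symm⟩
        · by_cases hvw : v = w
          · subst hvw
            rw [segment_symm] at hX1'
            have hX : X = pA k (i, v) :=
              seg_shared (oR_ne i (fun h => huv h.symm) hwz huz) X hX1' hX2'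
            exact ⟨(i, v), ⟨Or.inr rfl, Or.inl rfl⟩, hX.symm⟩
          · by_cases hvz : v = z
            · subst hvz
              rw [segment_symm] at hX1' hX2'
              have hX : X = pA k (i, v) :=
                seg_shared (oR_ne i (fun h => huv h.symm) hvw huw) X hX1' hX2'
              exact ⟨(i, v), ⟨Or.inr rfl, Or.inr rfl⟩, hX.symm⟩
            · exfalso
              have hsep := D2 u v w z (adjE hadj1) (adjE hadj2) huw huz hvw hvz
              have ozswap : ∀ a b c : ℤ × ℤ, oz b a c = - oz a b c := by
                intro a b c; unfold oz; ring
              rcases hsep with ⟨s1, s2⟩ | ⟨s1, s2⟩ | ⟨s1, s2⟩ | ⟨s1, s2⟩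
              · refine seg_disj_orient (a := pA k (i, u)) (b := pA k (i, v)) ?_ ?_ X hX1' hX2' <;>
                  rw [oR_pA] <;> exact_mod_cast ‹_›
              · rw [segment_symm] at hX1'
                refine seg_disj_orient (a := pA k (i, v)) (b := pA k (i, u)) ?_ ?_ X hX1' hX2'
                · rw [oR_pA]
                  have h' : (0:ℤ) < oz (qz v) (qz u) (qz w) := by rw [ozswap]; linarith
                  exact_mod_cast h'
                · rw [oR_pA]
                  have h' : (0:ℤ) < oz (qz v) (qz u) (qz z) := by rw [ozswap]; linarith
                  exact_mod_cast h'
              · refine seg_disj_orient (a := pA k (i, w)) (b := pA k (i, z)) ?_ ?_ X hX2' hX1' <;>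
                  rw [oR_pA] <;> exact_mod_cast ‹_›
              · rw [segment_symm] at hX2'
                refine seg_disj_orient (a := pA k (i, z)) (b := pA k (i, w)) ?_ ?_ X hX2' hX1'
                · rw [oR_pA]
                  have h' : (0:ℤ) < oz (qz z) (qz w) (qz u) := by rw [ozswap]; linarith
                  exact_mod_cast h'
                · rw [oR_pA]
                  have h' : (0:ℤ) < oz (qz z) (qz w) (qz v) := by rw [ozswap]; linarith
                  exact_mod_cast h'
    · -- different copies
      exfalso
      have b1 := (pA_bounds (k := k) (i, u)).1
      have b2 := (pA_bounds (k := k) (i, u)).2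
      have b3 := (pA_bounds (k := k) (i, v)).1
      have b4 := (pA_bounds (k := k) (i, v)).2
      have hb := seg_x_bound b1 b2 b3 b4 _ hX1'
      have c1 := (pA_bounds (k := k) (j, w)).1
      have c2 := (pA_bounds (k := k) (j, w)).2
      have c3 := (pA_bounds (k := k) (j, z)).1
      have c4 := (pA_bounds (k := k) (j, z)).2
      have hc := seg_x_bound c1 c2 c3 c4 _ hX2'
      have e : i = j := strips hb.1 hb.2 hc.1 hc.2
      exact hij e



/-- A strictly-noninterleaving family of "diagonals" on `n` spine points,
excluding the full pair `(0, n-1)`, has at most `n - 3` members. -/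
lemma F1 : ∀ (n : ℕ) (F : Finset (ℕ × ℕ)),
    (∀ p ∈ F, p.1 + 2 ≤ p.2 ∧ p.2 + 1 ≤ n ∧ ¬(p.1 = 0 ∧ p.2 + 1 = n)) →
    (∀ p ∈ F, ∀ q ∈ F, ¬(p.1 < q.1 ∧ q.1 < p.2 ∧ p.2 < q.2)) →
    F.card ≤ n - 3 := by
  intro n
  induction n with
  | zero =>
    intro F hb _
    rcases F.eq_empty_or_nonempty with rfl | ⟨p, hp⟩
    · simp
    · exact absurd ((hb p hp).2.1) (by omega)
  | succ n ih =>
    intro F hb hni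
    rcases F.eq_empty_or_nonempty with rfl | hne
    · simp
    · obtain ⟨p₀, hp₀, hmin⟩ := F.exists_min_image (fun p => p.2 - p.1) hne
      obtain ⟨hg₀, hb₀, hx₀⟩ := hb p₀ hp₀
      set m : ℕ := p₀.1 + 1 with hm
      -- no other diagonal touches m
      have hkey : ∀ q ∈ F, q ≠ p₀ → q.1 ≠ m ∧ q.2 ≠ m := by
        intro q hq hqe
        obtain ⟨hgq, hbq, _⟩ := hb q hq
        have hminq := hmin q hq
        constructor
        · intro h1
          -- q = (m, q.2) with q.2 > p₀.2 : interleaving p₀ q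
          have hq2 : p₀.2 < q.2 := by
            rcases Nat.lt_or_ge p₀.2 q.2 with h | h
            · exact h
            · exfalso
              rcases Nat.lt_or_ge q.2 p₀.2 with h' | h'
              · omega
              · -- q.2 = p₀.2 : q = (m, p₀.2) has smaller gap
                have : q.2 = p₀.2 := le_antisymm h h'
                apply hqe
                have : q.2 - q.1 < p₀.2 - p₀.1 := by omega
                omega
          exact hni p₀ hp₀ q hq (by omega)
        · intro h2
          -- q = (q.1, m) with q.1 < p₀.1 : interleaving q p₀
          exact hni q hq p₀ hp₀ (by omega)
      -- relabeling map deleting the point m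
      set φ : ℕ × ℕ → ℕ × ℕ :=
        fun q => ((if q.1 < m then q.1 else q.1 - 1), (if q.2 < m then q.2 else q.2 - 1)) with hφ
      set F' : Finset (ℕ × ℕ) := (F.erase p₀).image φ with hF'
      have hmem : ∀ q ∈ F.erase p₀, q.1 ≠ m ∧ q.2 ≠ m ∧ q ∈ F ∧ q ≠ p₀ := by
        intro q hq
        have h1 := Finset.mem_of_mem_erase hq
        have h2 := Finset.ne_of_mem_erase hq
        exact ⟨(hkey q h1 h2).1, (hkey q h1 h2).2, h1, h2⟩
      have hinj : Set.InjOn φ (F.erase p₀ : Set (ℕ × ℕ)) := by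
        intro q hq q' hq' he
        obtain ⟨e1, e2, _, _⟩ := hmem q hq
        obtain ⟨e1', e2', _, _⟩ := hmem q' hq'
        have c1 : (if q.1 < m then q.1 else q.1 - 1) = (if q'.1 < m then q'.1 else q'.1 - 1) :=
          congrArg Prod.fst he
        have c2 : (if q.2 < m then q.2 else q.2 - 1) = (if q'.2 < m then q'.2 else q'.2 - 1) :=
          congrArg Prod.snd he
        have : q.1 = q'.1 := by split_ifs at c1 <;> omega
        have : q.2 = q'.2 := by split_ifs at c2 <;> omega
        exact Prod.ext ‹q.1 = q'.1› ‹q.2 = q'.2›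
      have hcard' : F'.card = F.card - 1 := by
        rw [hF', Finset.card_image_of_injOn hinj, Finset.card_erase_of_mem hp₀]
      have hb' : ∀ p ∈ F', p.1 + 2 ≤ p.2 ∧ p.2 + 1 ≤ n ∧ ¬(p.1 = 0 ∧ p.2 + 1 = n) := by
        intro p hp
        obtain ⟨q, hq, rfl⟩ := Finset.mem_image.1 hp
        obtain ⟨e1, e2, hqF, hqne⟩ := hmem q hq
        obtain ⟨hgq, hbq, hxq⟩ := hb q hqF
        have hminq := hmin q hqF
        -- if q spans m with gap exactly 2 then q = p₀
        have hspan : ¬(q.1 < m ∧ m < q.2 ∧ q.2 = q.1 + 2) := by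
          rintro ⟨s1, s2, s3⟩
          apply hqne
          have : q.1 = p₀.1 := by omega
          have : q.2 = p₀.2 := by omega
          exact Prod.ext ‹q.1 = p₀.1› ‹q.2 = p₀.2›
        refine ⟨?_, ?_, ?_⟩
        · simp only [hφ]; split_ifs <;> omega
        · simp only [hφ]; split_ifs <;> omega
        · simp only [hφ]; split_ifs <;> omega
      have hni' : ∀ p ∈ F', ∀ q ∈ F', ¬(p.1 < q.1 ∧ q.1 < p.2 ∧ p.2 < q.2) := by
        rintro p hp q hq ⟨i1, i2, i3⟩
        obtain ⟨q1, hq1, rfl⟩ := Finset.mem_image.1 hp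
        obtain ⟨q2, hq2, rfl⟩ := Finset.mem_image.1 hq
        obtain ⟨e1, e2, hqF1, _⟩ := hmem q1 hq1
        obtain ⟨e1', e2', hqF2, _⟩ := hmem q2 hq2
        apply hni q1 hqF1 q2 hqF2
        simp only [hφ] at i1 i2 i3
        split_ifs at i1 i2 i3 <;> omega
      have hrec := ih F' hb' hni'
      have h4 : 4 ≤ n + 1 := by omega
      omega

def E0 : Finset (Fin 11 × Fin 11) := GHL.toFinset

set_option maxRecDepth 100000 in
lemma Df : E0.card = 27 := by decide

set_option maxRecDepth 100000 in
lemma Db : ∀ e ∈ E0, EdgeB e.1 e.2 = true ∧ e.1 ≠ e.2 := by decide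

set_option maxRecDepth 100000 in
lemma Dc : ∀ e ∈ E0, ∀ e' ∈ E0, ¬(e.1 = e'.2 ∧ e.2 = e'.1) := by decide

set_option maxRecDepth 100000 in
lemma Dd : ∀ u v : Fin 11, EdgeB u v = true → (u, v) ∈ E0 ∨ (v, u) ∈ E0 := by decide

lemma De : ∀ u v : Fin 11, 5 ≤ (u : ℕ) → 5 ≤ (v : ℕ) → EdgeB u v = false := by decide

lemma EdgeB_symm (u v : Fin 11) : EdgeB u v = EdgeB v u := by
  simp only [EdgeB, Bool.or_comm]

lemma minmax : ∀ p q p' q' : ℕ, min p q = min p' q' → max p q = max p' q' →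
    (p = p' ∧ q = q') ∨ (p = q' ∧ q = p') := by omega

theorem COMB (ξ : Fin 11 → ℝ) (hξ : Function.Injective ξ)
    (pg : Fin 11 → Fin 11 → Prop)
    (hsym : ∀ u v, EdgeB u v = true → (pg u v ↔ pg v u))
    (hK : ∀ u v w z, EdgeB u v = true → EdgeB w z = true →
      ξ u < ξ w → ξ w < ξ v → ξ v < ξ z → ¬ (pg u v ↔ pg w z)) : False := by
  classical
  set ρ := Tuple.sort ξ with hρ
  have hmono : StrictMono (ξ ∘ ρ) :=
    (Tuple.monotone_sort ξ).strictMono_of_injective (hξ.comp ρ.injective)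
  set pos : Fin 11 → Fin 11 := fun t => ρ.symm t with hpos
  have hlt : ∀ u v : Fin 11, ξ u < ξ v ↔ pos u < pos v := by
    intro u v
    have e1 : ξ u = (ξ ∘ ρ) (pos u) := by simp [hpos]
    have e2 : ξ v = (ξ ∘ ρ) (pos v) := by simp [hpos]
    rw [e1, e2]
    exact hmono.lt_iff_lt
  have hposinj : Function.Injective pos := ρ.symm.injective
  set a : Fin 11 × Fin 11 → ℕ := fun e => min (pos e.1 : ℕ) (pos e.2 : ℕ) with ha
  set b : Fin 11 × Fin 11 → ℕ := fun e => max (pos e.1 : ℕ) (pos e.2 : ℕ) with hb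
  have hab : ∀ e ∈ E0, a e < b e := by
    intro e he
    have hne : pos e.1 ≠ pos e.2 := fun h => (Db e he).2 (hposinj h)
    have : (pos e.1 : ℕ) ≠ (pos e.2 : ℕ) := fun h => hne (Fin.ext h)
    simp only [ha, hb]
    omega
  -- unordered pair of positions determines the edge
  have hdet : ∀ e ∈ E0, ∀ e' ∈ E0, a e = a e' → b e = b e' → e = e' := by
    intro e he e' he' h1 h2
    rcases minmax _ _ _ _ h1 h2 with ⟨c1, c2⟩ | ⟨c1, c2⟩
    · have d1 : pos e.1 = pos e'.1 := Fin.ext c1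
      have d2 : pos e.2 = pos e'.2 := Fin.ext c2
      exact Prod.ext (hposinj d1) (hposinj d2)
    · have d1 : pos e.1 = pos e'.2 := Fin.ext c1
      have d2 : pos e.2 = pos e'.1 := Fin.ext c2
      exact absurd ⟨hposinj d1, hposinj d2⟩ (Dc e he e' he')
  -- the oriented endpoints of an edge
  have horient : ∀ e ∈ E0, ∃ u v : Fin 11, EdgeB u v = true ∧ (pg u v ↔ pg e.1 e.2) ∧
      (pos u : ℕ) = a e ∧ (pos v : ℕ) = b e := by
    intro e he
    rcases le_or_gt (pos e.1 : ℕ) (pos e.2 : ℕ) with h | h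
    · exact ⟨e.1, e.2, (Db e he).1, Iff.rfl, by simp [ha]; omega, by simp [hb]; omega⟩
    · refine ⟨e.2, e.1, by rw [EdgeB_symm]; exact (Db e he).1,
        (hsym e.1 e.2 (Db e he).1).symm, by simp [ha]; omega, by simp [hb]; omega⟩
  -- classification
  set B : Finset (Fin 11 × Fin 11) := E0.filter (fun e => b e = a e + 1) with hB
  set I : Finset (Fin 11 × Fin 11) := E0.filter (fun e => a e = 0 ∧ b e = 10) with hI
  set D : Finset (Fin 11 × Fin 11) :=
    E0.filter (fun e => a e + 2 ≤ b e ∧ ¬(a e = 0 ∧ b e = 10)) with hD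
  have hcover : E0 ⊆ B ∪ I ∪ D := by
    intro e he
    have := hab e he
    simp only [hB, hI, hD, Finset.mem_union, Finset.mem_filter]
    by_cases h1 : b e = a e + 1
    · exact Or.inl (Or.inl ⟨he, h1⟩)
    · by_cases h2 : a e = 0 ∧ b e = 10
      · exact Or.inl (Or.inr ⟨he, h2⟩)
      · exact Or.inr ⟨he, by omega, h2⟩
  set Du : Finset (Fin 11 × Fin 11) := D.filter (fun e => pg e.1 e.2) with hDu
  set Dd : Finset (Fin 11 × Fin 11) := D.filter (fun e => ¬ pg e.1 e.2) with hDd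
  have hDsplit : D = Du ∪ Dd := by
    rw [hDu, hDd]
    rw [Finset.filter_union_filter_not_eq]
  -- bound the diagonal pages via F1
  have hdiag : ∀ (P : Finset (Fin 11 × Fin 11)), P ⊆ D →
      (∀ e ∈ P, ∀ e' ∈ P, (pg e.1 e.2 ↔ pg e'.1 e'.2)) → P.card ≤ 8 := by
    intro P hPD hPpg
    have hPE : P ⊆ E0 := hPD.trans (Finset.filter_subset _ _)
    set ψ : Fin 11 × Fin 11 → ℕ × ℕ := fun e => (a e, b e) with hψ
    have hinj : Set.InjOn ψ (P : Set (Fin 11 × Fin 11)) := by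
      intro e he e' he' h
      exact hdet e (hPE he) e' (hPE he') (congrArg Prod.fst h) (congrArg Prod.snd h)
    have hcard : (P.image ψ).card = P.card := Finset.card_image_of_injOn hinj
    have h8 : (P.image ψ).card ≤ 11 - 3 := by
      apply F1 11
      · intro q hq
        obtain ⟨e, he, rfl⟩ := Finset.mem_image.1 hq
        have hD' := (Finset.mem_filter.1 (hPD he)).2
        have hb11 : b e < 11 := by
          simp only [hb]
          have := (pos e.1).isLt
          have := (pos e.2).isLt
          omega
        simp only [hψ]
        exact ⟨hD'.1, by omega, by simpa using hD'.2⟩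
      · rintro q hq q' hq' ⟨i1, i2, i3⟩
        obtain ⟨e, he, rfl⟩ := Finset.mem_image.1 hq
        obtain ⟨e', he', rfl⟩ := Finset.mem_image.1 hq'
        obtain ⟨u, v, hE1, hpg1, hu1, hv1⟩ := horient e (hPE he)
        obtain ⟨w, z, hE2, hpg2, hw2, hz2⟩ := horient e' (hPE he')
        simp only [hψ] at i1 i2 i3
        refine hK u v w z hE1 hE2 ?_ ?_ ?_
          ((hpg1.trans (hPpg e he e' he')).trans hpg2.symm)
        · rw [hlt, Fin.lt_def]; omega
        · rw [hlt, Fin.lt_def]; omega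
        · rw [hlt, Fin.lt_def]; omega
    omega
  have hDu8 : Du.card ≤ 8 := by
    apply hdiag Du (Finset.filter_subset _ _)
    intro e he e' he'
    exact iff_of_true (Finset.mem_filter.1 he).2 (Finset.mem_filter.1 he').2
  have hDd8 : Dd.card ≤ 8 := by
    apply hdiag Dd (Finset.filter_subset _ _)
    intro e he e' he'
    exact iff_of_false (Finset.mem_filter.1 he).2 (Finset.mem_filter.1 he').2
  -- the boundary edges
  have hBsub : ∀ e ∈ B, e ∈ E0 ∧ b e = a e + 1 := fun e he =>
    ⟨(Finset.mem_filter.1 he).1, (Finset.mem_filter.1 he).2⟩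
  set BI : Finset ℕ := B.image a with hBI
  have hBinj : Set.InjOn a (B : Set (Fin 11 × Fin 11)) := by
    intro e he e' he' h
    obtain ⟨m1, m2⟩ := hBsub e he
    obtain ⟨m1', m2'⟩ := hBsub e' he'
    exact hdet e m1 e' m1' h (by omega)
  have hBcard : B.card = BI.card := (Finset.card_image_of_injOn hBinj).symm
  have hBIsub : BI ⊆ Finset.range 10 := by
    intro i hi
    obtain ⟨e, he, rfl⟩ := Finset.mem_image.1 hi
    obtain ⟨m1, m2⟩ := hBsub e he
    have hb11 : b e < 11 := by
      simp only [hb]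
      have := (pos e.1).isLt
      have := (pos e.2).isLt
      omega
    exact Finset.mem_range.2 (by omega)
  have hB10 : B.card ≤ 10 := by
    rw [hBcard]
    calc BI.card ≤ (Finset.range 10).card := Finset.card_le_card hBIsub
    _ = 10 := Finset.card_range 10
  have hI1 : I.card ≤ 1 := by
    apply Finset.card_le_one.2
    intro e he e' he'
    obtain ⟨m1, m2⟩ := Finset.mem_filter.1 he
    obtain ⟨m1', m2'⟩ := Finset.mem_filter.1 he'
    exact hdet e m1 e' m1' (by omega) (by omega)
  -- counting
  have hcount : 27 ≤ B.card + I.card + (Du.card + Dd.card) := by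
    calc (27 : ℕ) = E0.card := Df.symm
    _ ≤ (B ∪ I ∪ D).card := Finset.card_le_card hcover
    _ ≤ (B ∪ I).card + D.card := Finset.card_union_le _ _
    _ ≤ B.card + I.card + D.card := by
        have := Finset.card_union_le B I
        omega
    _ ≤ B.card + I.card + (Du.card + Dd.card) := by
        have h1 : D.card ≤ Du.card + Dd.card := by
          rw [hDsplit]; exact Finset.card_union_le _ _
        omega
  have hBeq : B.card = 10 := by omega
  have hIne : I.Nonempty := Finset.card_pos.1 (by omega)
  -- every consecutive spine pair is an edge
  have hBfull : BI = Finset.range 10 := by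
    apply Finset.eq_of_subset_of_card_le hBIsub
    rw [Finset.card_range, ← hBcard, hBeq]
  have hconsec : ∀ i : ℕ, i < 10 → ∃ e ∈ E0, a e = i ∧ b e = i + 1 := by
    intro i hi
    have : i ∈ BI := hBfull ▸ Finset.mem_range.2 hi
    obtain ⟨e, he, rfl⟩ := Finset.mem_image.1 this
    exact ⟨e, (hBsub e he).1, rfl, (hBsub e he).2⟩
  -- spine-adjacent vertices are adjacent in the graph
  have hedge : ∀ e ∈ E0, EdgeB (ρ ⟨a e % 11, Nat.mod_lt _ (by norm_num)⟩)
      (ρ ⟨b e % 11, Nat.mod_lt _ (by norm_num)⟩) = true := by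
    intro e he
    obtain ⟨u, v, hE1, _, hu1, hv1⟩ := horient e he
    have h1 : ρ ⟨a e % 11, Nat.mod_lt _ (by norm_num)⟩ = u := by
      rw [← hu1]
      have : (⟨(pos u : ℕ) % 11, Nat.mod_lt _ (by norm_num)⟩ : Fin 11) = pos u := by
        apply Fin.ext
        simp [Nat.mod_eq_of_lt (pos u).isLt]
      rw [this]
      simp [hpos]
    have h2 : ρ ⟨b e % 11, Nat.mod_lt _ (by norm_num)⟩ = v := by
      rw [← hv1]
      have : (⟨(pos v : ℕ) % 11, Nat.mod_lt _ (by norm_num)⟩ : Fin 11) = pos v := by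
        apply Fin.ext
        simp [Nat.mod_eq_of_lt (pos v).isLt]
      rw [this]
      simp [hpos]
    rw [h1, h2]
    exact hE1
  have cyc : ∀ t : Fin 11, EdgeB (ρ t) (ρ (t + 1)) = true := by
    intro t
    by_cases ht : (t : ℕ) < 10
    · obtain ⟨e, he, he1, he2⟩ := hconsec (t : ℕ) ht
      have := hedge e he
      rw [he1, he2] at this
      have e1 : (⟨(t : ℕ) % 11, Nat.mod_lt _ (by norm_num)⟩ : Fin 11) = t := by
        apply Fin.ext; simp [Nat.mod_eq_of_lt t.isLt]
      have e2 : (⟨((t : ℕ) + 1) % 11, Nat.mod_lt _ (by norm_num)⟩ : Fin 11) = t + 1 := by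
        apply Fin.ext
        simp [Fin.add_def]
      rw [e1, e2] at this
      exact this
    · obtain ⟨e, heI⟩ := hIne
      obtain ⟨m1, m2⟩ := Finset.mem_filter.1 heI
      have := hedge e m1
      rw [m2.1, m2.2] at this
      have ht10 : (t : ℕ) = 10 := by have := t.isLt; omega
      have e1 : (⟨(10 : ℕ) % 11, Nat.mod_lt _ (by norm_num)⟩ : Fin 11) = t := by
        apply Fin.ext; simp [ht10]
      have e2 : (⟨(0 : ℕ) % 11, Nat.mod_lt _ (by norm_num)⟩ : Fin 11) = t + 1 := by
        apply Fin.ext; simp [Fin.add_def, ht10]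
      rw [e1, e2] at this
      rw [EdgeB_symm]
      exact this
  -- Goldner–Harary graph has no Hamiltonian cycle: 6 pairwise nonadjacent
  -- vertices would need 6 distinct successors among the other 5
  set S : Finset (Fin 11) := Finset.univ.filter (fun x : Fin 11 => 5 ≤ (x : ℕ)) with hS
  have hScard : S.card = 6 := by decide
  set T : Finset (Fin 11) := Finset.univ.filter (fun t : Fin 11 => 5 ≤ ((ρ t : Fin 11) : ℕ))
    with hT
  have hTeq : T = S.image (fun x => ρ.symm x) := by
    ext t
    simp only [hT, hS, Finset.mem_filter, Finset.mem_image, Finset.mem_univ, true_and]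
    constructor
    · intro h
      exact ⟨ρ t, h, by simp⟩
    · rintro ⟨x, hx, rfl⟩
      simpa using hx
  have hTcard : T.card = 6 := by
    rw [hTeq, Finset.card_image_of_injective _ ρ.symm.injective, hScard]
  set T' : Finset (Fin 11) := Finset.univ.filter (fun t : Fin 11 => ¬ 5 ≤ ((ρ t : Fin 11) : ℕ))
    with hT'
  have hT'card : T'.card = 5 := by
    have : T' = Finset.univ \ T := by
      rw [hT', hT, Finset.filter_not]
    rw [this, Finset.card_sdiff_of_subset (Finset.subset_univ T), hTcard]
    simp
  have hstep : ∀ t ∈ T, t + 1 ∈ T' := by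
    intro t ht
    have h5 : 5 ≤ ((ρ t : Fin 11) : ℕ) := (Finset.mem_filter.1 ht).2
    simp only [hT', Finset.mem_filter, Finset.mem_univ, true_and]
    intro h5'
    have := De (ρ t) (ρ (t + 1)) h5 h5'
    rw [cyc t] at this
    exact absurd this (by simp)
  have hinj1 : Set.InjOn (fun t : Fin 11 => t + 1) (T : Set (Fin 11)) := fun x _ y _ h => by
    have h' : x + 1 = y + 1 := h
    exact add_right_cancel h' 
  have : T.card ≤ T'.card := by
    rw [← Finset.card_image_of_injOn hinj1]
    apply Finset.card_le_card
    intro x hx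
    obtain ⟨t, ht, rfl⟩ := Finset.mem_image.1 hx
    exact hstep t ht
  omega

-- new material
lemma EdgeB_ne : ∀ u v : Fin 11, EdgeB u v = true → u ≠ v := by decide

lemma adj_of_EdgeB {u v : Fin 11} (h : EdgeB u v = true) : GoldnerHarary.Adj u v := by
  rw [GoldnerHarary, SimpleGraph.fromRel_adj]
  refine ⟨EdgeB_ne u v h, ?_⟩
  simpa [EdgeB, GHL] using h

lemma seg_reflectL {x y b : ℝ} {z : ℝ × ℝ} (h : z ∈ segment ℝ ((x, 0) : ℝ × ℝ) (y, b)) :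
    ((z.1, -z.2) : ℝ × ℝ) ∈ segment ℝ ((x, (0 : ℝ)) : ℝ × ℝ) (y, -b) := by
  rcases mem_seg.1 h with ⟨t, h0, h1, e1, e2⟩
  refine mem_seg.2 ⟨t, h0, h1, ?_, ?_⟩
  · simpa using e1
  · simp only at e2 ⊢
    simp at e2 ⊢
    linarith

lemma seg_reflectR {x y b : ℝ} {z : ℝ × ℝ} (h : z ∈ segment ℝ ((y, b) : ℝ × ℝ) (x, 0)) :
    ((z.1, -z.2) : ℝ × ℝ) ∈ segment ℝ ((y, -b) : ℝ × ℝ) (x, (0 : ℝ)) := by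
  rcases mem_seg.1 h with ⟨t, h0, h1, e1, e2⟩
  refine mem_seg.2 ⟨t, h0, h1, ?_, ?_⟩
  · simpa using e1
  · simp only at e2 ⊢
    simp at e2 ⊢
    linarith

theorem no_free_copy {k : ℕ} (c : Fin k) (p : Fin k × Fin 11 → ℝ × ℝ)
    (bend : Fin k × Fin 11 → Fin k × Fin 11 → ℝ × ℝ)
    (hCF : IsOneBendCF (copies k GoldnerHarary) p bend)
    (ξ : Fin 11 → ℝ) (hξ : Function.Injective ξ)
    (hplace : ∀ j : Fin 11, p (c, j) = (ξ j, 0)) : False := by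
  obtain ⟨hinj, hbsym, h3, h4⟩ := hCF
  apply COMB ξ hξ (fun u v => 0 ≤ (bend (c, u) (c, v)).2)
  · intro u v hE
    have hA : (copies k GoldnerHarary).Adj (c, u) (c, v) := ⟨rfl, adj_of_EdgeB hE⟩
    rw [hbsym _ _ hA]
  · intro u v w z hE1 hE2 o1 o2 o3 hpg
    have hA1 : (copies k GoldnerHarary).Adj (c, u) (c, v) := ⟨rfl, adj_of_EdgeB hE1⟩
    have hA2 : (copies k GoldnerHarary).Adj (c, w) (c, z) := ⟨rfl, adj_of_EdgeB hE2⟩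
    set b1 := bend (c, u) (c, v) with hb1
    set b2 := bend (c, w) (c, z) with hb2
    have duw : u ≠ w := fun h => by rw [h] at o1; exact lt_irrefl _ o1
    have duv : u ≠ v := fun h => by rw [h] at o1; exact lt_irrefl _ (o1.trans o2)
    have duz : u ≠ z := fun h => by rw [h] at o1; exact lt_irrefl _ ((o1.trans o2).trans o3)
    have dwv : w ≠ v := fun h => by rw [h] at o2; exact lt_irrefl _ o2
    have dwz : w ≠ z := fun h => by rw [h] at o2; exact lt_irrefl _ (o2.trans o3)
    have dvz : v ≠ z := fun h => by rw [h] at o3; exact lt_irrefl _ o3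
    -- common endgame once a point on both chains is found
    have hfinal : ∀ Z : ℝ × ℝ,
        (Z ∈ segment ℝ ((ξ u, 0) : ℝ × ℝ) (b1.1, b1.2) ∪
          segment ℝ ((b1.1, b1.2) : ℝ × ℝ) (ξ v, 0)) →
        (Z ∈ segment ℝ ((ξ w, 0) : ℝ × ℝ) (b2.1, b2.2) ∪
          segment ℝ ((b2.1, b2.2) : ℝ × ℝ) (ξ z, 0)) → False := by
      intro Z hZ1 hZ2
      have hne : ({(c, u), (c, v)} : Set (Fin k × Fin 11)) ≠ {(c, w), (c, z)} := by
        intro hEq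
        have : (c, u) ∈ ({(c, w), (c, z)} : Set (Fin k × Fin 11)) := by
          rw [← hEq]; left; rfl
        rcases this with h | h
        · exact duw (by injection h with _ h2)
        · exact duz (by injection h with _ h2)
      have hZ1' : Z ∈ segment ℝ (p (c, u)) (bend (c, u) (c, v)) ∪
          segment ℝ (bend (c, u) (c, v)) (p (c, v)) := by
        rw [hplace u, hplace v, ← hb1]
        simpa using hZ1
      have hZ2' : Z ∈ segment ℝ (p (c, w)) (bend (c, w) (c, z)) ∪
          segment ℝ (bend (c, w) (c, z)) (p (c, z)) := by
        rw [hplace w, hplace z, ← hb2]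
        simpa using hZ2
      obtain ⟨y, ⟨hy1, hy2⟩, _⟩ := h4 (c, u) (c, v) (c, w) (c, z) hA1 hA2 hne ⟨hZ1', hZ2'⟩
      rcases hy1 with h | h <;> rcases hy2 with h' | h'
      · exact duw (by rw [h] at h'; injection h' with _ h2)
      · exact duz (by rw [h] at h'; injection h' with _ h2)
      · exact dwv (by rw [h] at h'; injection h' with _ h2; exact h2.symm)
      · exact dvz (by rw [h] at h'; injection h' with _ h2)
    rcases le_or_gt 0 b1.2 with hs1 | hs1
    · have hs2 : 0 ≤ b2.2 := hpg.1 hs1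
      rcases eq_or_lt_of_le hs1 with hflat1 | hpos1
      · -- edge uv drawn flat : it covers the vertex w
        have hb1flat : (b1.1, b1.2) = ((b1.1, (0 : ℝ)) : ℝ × ℝ) := by rw [← hflat1]
        apply h3 (c, u) (c, v) (c, w) hA1
          (fun h => duw (by injection h with h1 h2; exact h2.symm))
          (fun h => dwv (by injection h with h1 h2))
        rw [hplace u, hplace v, hplace w, ← hb1]
        have := flat_covers (p1 := b1.1) o1.le o2.le
        rw [← hb1flat] at this
        simpa using this
      · rcases eq_or_lt_of_le hs2 with hflat2 | hpos2
        · -- edge wz drawn flat : it covers the vertex v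
          have hb2flat : (b2.1, b2.2) = ((b2.1, (0 : ℝ)) : ℝ × ℝ) := by rw [← hflat2]
          apply h3 (c, w) (c, z) (c, v) hA2
            (fun h => dwv (by injection h with _ h2; exact h2.symm))
            (fun h => dvz (by injection h with _ h2))
          rw [hplace w, hplace z, hplace v, ← hb2]
          have := flat_covers (p1 := b2.1) o2.le o3.le
          rw [← hb2flat] at this
          simpa using this
        · obtain ⟨Z, hZ1, hZ2⟩ := crossing o1 o2 o3 hpos1 hpos2
          exact hfinal Z hZ1 hZ2
    · have hs2 : b2.2 < 0 := by
        by_contra hcon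
        exact absurd (hpg.2 (not_lt.1 hcon)) (not_le.2 hs1)
      obtain ⟨Z, hZ1, hZ2⟩ := crossing (p1 := b1.1) (q1 := b2.1) o1 o2 o3
        (by linarith : (0:ℝ) < -b1.2) (by linarith : (0:ℝ) < -b2.2)
      apply hfinal (Z.1, -Z.2)
      · rcases hZ1 with h | h
        · left
          have := seg_reflectL h
          rwa [neg_neg] at this
        · right
          have := seg_reflectR h
          rwa [neg_neg] at this
      · rcases hZ2 with h | h
        · left
          have := seg_reflectL h
          rwa [neg_neg] at this
        · right
          have := seg_reflectR h
          rwa [neg_neg] at this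


end OB

/-- The disjoint union of `k ≥ 1` copies of the Goldner–Harary graph is a planar
graph on `n = 11k` vertices whose largest 1-bend free set has size at most
`10n/11 = 10k`. -/
theorem stmt_17 (k : ℕ) (hk : 0 < k) :
    IsPlanar (copies k GoldnerHarary) ∧
    ∀ (s : ℕ) (v : Fin s → Fin k × Fin 11), Function.Injective v →
      IsOneBendFreeSeq (copies k GoldnerHarary) v → s ≤ 10 * k := by
  constructor
  · exact OB.copies_planar k
  · intro s v hv hfree
    by_contra hcon
    push_neg at hcon
    have hmaps : ∀ i ∈ (Finset.univ : Finset (Fin s)),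
        (v i).1 ∈ (Finset.univ : Finset (Fin k)) := fun _ _ => Finset.mem_univ _
    have hlt : (Finset.univ : Finset (Fin k)).card * 10 < (Finset.univ : Finset (Fin s)).card := by
      simp only [Finset.card_univ, Fintype.card_fin]
      omega
    obtain ⟨c, _, hc⟩ := Finset.exists_lt_card_fiber_of_mul_lt_card_of_maps_to hmaps hlt
    set Fib : Finset (Fin s) := Finset.univ.filter (fun i : Fin s => (v i).1 = c) with hFib
    have hinjOn : Set.InjOn (fun i => (v i).2) (Fib : Set (Fin s)) := by
      intro i hi j hj h
      apply hv
      have hi' : (v i).1 = c := by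
        have := hi
        simp only [hFib, Finset.coe_filter, Set.mem_setOf_eq] at this
        exact this.2
      have hj' : (v j).1 = c := by
        have := hj
        simp only [hFib, Finset.coe_filter, Set.mem_setOf_eq] at this
        exact this.2
      apply Prod.ext
      · rw [hi', hj']
      · exact h
    have himg : (Fib.image (fun i => (v i).2)).card = Fib.card :=
      Finset.card_image_of_injOn hinjOn
    have hsub : Fib.image (fun i => (v i).2) = Finset.univ := by
      apply Finset.eq_of_subset_of_card_le (Finset.subset_univ _)
      rw [himg]
      simp only [Finset.card_univ, Fintype.card_fin]
      omega
    have hexists : ∀ j : Fin 11, ∃ i : Fin s, v i = (c, j) := by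
      intro j
      have hj : j ∈ Fib.image (fun i => (v i).2) := hsub ▸ Finset.mem_univ j
      obtain ⟨i, hi, hij⟩ := Finset.mem_image.1 hj
      refine ⟨i, Prod.ext ?_ hij⟩
      exact (Finset.mem_filter.1 hi).2
    choose idx hidx using hexists
    obtain ⟨p, bend, hCF, hplace⟩ := hfree (fun i => ((i : ℕ) : ℝ)) (fun _ => 0)
      (fun a b hab => by simp only []; exact_mod_cast hab)
    refine OB.no_free_copy c p bend hCF (fun j => ((idx j : ℕ) : ℝ)) ?_ ?_
    · intro j j' h
      have h' : ((idx j : ℕ) : ℝ) = ((idx j' : ℕ) : ℝ) := h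
      have h1 : idx j = idx j' := Fin.ext (by exact_mod_cast h')
      have h2 := congrArg v h1
      rw [hidx, hidx] at h2
      injection h2 with _ h3
    · intro j
      have := hplace (idx j)
      rw [hidx j] at this
      exact this
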